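/- arXiv:1902.04998 — 2 statements merged into one kernel-verified Lean document; each statement's English description precedes it below -/
import Mathlib

section
/- For all real a, b with a, b ∈ [-1,1], it holds that (1/4)[(a²-1)² - (b²-1)²] ≤ (b³-b)(a-b) + 2(a-b)². -/
/-! Subtracting the tangent line `F'(b)(a - b)`, with `F(u) = (u² - 1)²/4` and `F'(b) = b³ - b`,
leaves the Taylor remainder of `F` at `b`. As `F` is a quartic, that remainder is exactly
`(a - b)² ((a + b)² + 2b² - 2)/4`, and on `[-1, 1]²` the second factor is at most `1`. -/

namespace DoubleWell

noncomputable def potential (u : ℝ) : ℝ := (1 / 4) * (u ^ 2 - 1) ^ 2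

theorem potential_sub_sub_tangent_eq (a b : ℝ) :
    potential a - potential b - (b ^ 3 - b) * (a - b) =
      (a - b) ^ 2 * (((a + b) ^ 2 + 2 * b ^ 2 - 2) / 4) := by
  unfold potential
  ring

theorem potential_sub_sub_tangent_le {a b : ℝ} (ha : |a| ≤ 1) (hb : |b| ≤ 1) :
    potential a - potential b - (b ^ 3 - b) * (a - b) ≤ (a - b) ^ 2 := by
  obtain ⟨ha₁, ha₂⟩ := abs_le.mp ha
  obtain ⟨hb₁, hb₂⟩ := abs_le.mp hb
  have hsum : (a + b) ^ 2 ≤ 2 ^ 2 := sq_le_sq' (by linarith) (by linarith)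
  have hb_sq : b ^ 2 ≤ 1 := (sq_le_one_iff_abs_le_one b).mpr hb
  calc potential a - potential b - (b ^ 3 - b) * (a - b)
      = (a - b) ^ 2 * (((a + b) ^ 2 + 2 * b ^ 2 - 2) / 4) := potential_sub_sub_tangent_eq a b
    _ ≤ (a - b) ^ 2 * 1 := by gcongr; linarith
    _ = (a - b) ^ 2 := mul_one _

end DoubleWell

theorem stmt_3 (a b : ℝ) (ha : a ∈ Set.Icc (-1 : ℝ) 1) (hb : b ∈ Set.Icc (-1 : ℝ) 1) :
    (1 / 4) * ((a ^ 2 - 1) ^ 2 - (b ^ 2 - 1) ^ 2) ≤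
      (b ^ 3 - b) * (a - b) + 2 * (a - b) ^ 2 := by
  have h := DoubleWell.potential_sub_sub_tangent_le (abs_le.mpr ha) (abs_le.mpr hb)
  unfold DoubleWell.potential at h
  linarith [sq_nonneg (a - b)]
end

section
/- Let L ∈ ℝ^{m×m} be symmetric positive definite, τ > 0, and define B₁ = L - (I - e^{-Lτ})⁻¹ L. Then B₁ is symmetric and negative definite. -/
/-!
With `f x = x - (1 - exp (-τ x))⁻¹ x`, the functional calculus gives `B₁ = f(L)`. For `x > 0` we
have `0 < 1 - exp (-τ x) < 1`, so `f x < 0` on the spectrum of `L`, which makes `-B₁` strictly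
positive; self-adjointness is automatic for the real functional calculus.
-/

lemma one_sub_exp_neg_mul_ne_zero {τ x : ℝ} (hτ : τ ≠ 0) (hx : x ≠ 0) :
    1 - Real.exp (-τ * x) ≠ 0 := by
  rw [sub_ne_zero, ne_comm, Ne, Real.exp_eq_one_iff]
  simpa using ⟨hτ, hx⟩

lemma continuousOn_inv_one_sub_exp_neg_mul {τ : ℝ} (hτ : τ ≠ 0) :
    ContinuousOn (fun x => (1 - Real.exp (-τ * x))⁻¹) {0}ᶜ :=
  (by fun_prop : Continuous fun x => 1 - Real.exp (-τ * x)).continuousOn.inv₀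
    fun _ hx => one_sub_exp_neg_mul_ne_zero hτ hx

lemma lt_inv_one_sub_exp_neg_mul_mul {τ x : ℝ} (hτ : 0 < τ) (hx : 0 < x) :
    x < (1 - Real.exp (-τ * x))⁻¹ * x := by
  have hexp_lt_one : Real.exp (-τ * x) < 1 := Real.exp_lt_one_iff.mpr (by nlinarith)
  have hinv : 1 < (1 - Real.exp (-τ * x))⁻¹ :=
    (one_lt_inv₀ (by linarith)).mpr (by linarith [Real.exp_pos (-τ * x)])
  exact lt_mul_of_one_lt_left hx hinv

section CFC

variable {A : Type*} [NormedRing A] [StarRing A] [NormedAlgebra ℝ A] [StarModule ℝ A]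
  [ContinuousFunctionalCalculus ℝ A IsSelfAdjoint] {a : A} {τ : ℝ}

lemma cfc_sub_inv_one_sub_exp_neg_mul_mul (ha : IsSelfAdjoint a) (ha' : IsUnit a) (hτ : τ ≠ 0) :
    cfc (fun x => x - (1 - Real.exp (-τ * x))⁻¹ * x) a =
      a - Ring.inverse (1 - NormedSpace.exp (-τ • a)) * a := by
  have hspec : spectrum ℝ a ⊆ {0}ᶜ := fun x hx (hx0 : x = 0) =>
    spectrum.zero_notMem ℝ ha' (hx0 ▸ hx)
  have hcont := (continuousOn_inv_one_sub_exp_neg_mul hτ).mono hspec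
  have hexp : NormedSpace.exp (-τ • a) = cfc (fun x => Real.exp (-τ * x)) a := by
    rw [← CFC.real_exp_eq_normedSpace_exp (.smul (.all _) ha), ← cfc_comp_smul (-τ) Real.exp a]
    rfl
  rw [cfc_sub (fun x => x) (fun x => (1 - Real.exp (-τ * x))⁻¹ * x) a continuousOn_id
      (hcont.mul continuousOn_id),
    cfc_mul (fun x => (1 - Real.exp (-τ * x))⁻¹) (fun x => x) a hcont,
    cfc_inv (fun x => 1 - Real.exp (-τ * x)) a
      fun x hx => one_sub_exp_neg_mul_ne_zero hτ (hspec hx),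
    cfc_sub (fun _ => 1) _ a, cfc_const_one ℝ a, cfc_id' ℝ a, hexp]

lemma IsSelfAdjoint.sub_ringInverse_one_sub_exp_neg_smul_mul (ha : IsSelfAdjoint a)
    (ha' : IsUnit a) (hτ : τ ≠ 0) :
    IsSelfAdjoint (a - Ring.inverse (1 - NormedSpace.exp (-τ • a)) * a) :=
  cfc_sub_inv_one_sub_exp_neg_mul_mul ha ha' hτ ▸ IsSelfAdjoint.cfc

lemma IsStrictlyPositive.neg_sub_ringInverse_one_sub_exp_neg_smul_mul [PartialOrder A]
    [StarOrderedRing A] [NonnegSpectrumClass ℝ A] (ha : IsStrictlyPositive a) (hτ : 0 < τ) :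
    IsStrictlyPositive (-(a - Ring.inverse (1 - NormedSpace.exp (-τ • a)) * a)) := by
  have hspec : spectrum ℝ a ⊆ {0}ᶜ := fun x hx => (ha.spectrum_pos hx).ne'
  have hcont := (continuousOn_inv_one_sub_exp_neg_mul hτ.ne').mono hspec
  rw [← cfc_sub_inv_one_sub_exp_neg_mul_mul ha.isSelfAdjoint ha.isUnit hτ.ne', ← cfc_neg,
    cfc_isStrictlyPositive_iff (fun x => -(x - (1 - Real.exp (-τ * x))⁻¹ * x)) a
      (continuousOn_id.sub (hcont.mul continuousOn_id)).neg]
  intro x hx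
  linarith [lt_inv_one_sub_exp_neg_mul_mul hτ (ha.spectrum_pos hx)]

end CFC

theorem stmt_14_general (m : ℕ) (L : Matrix (Fin m) (Fin m) ℝ) (τ : ℝ) (hτ : 0 < τ)
    (hL : L.PosDef) :
    ((L - (1 - NormedSpace.exp (-τ • L))⁻¹ * L).IsSymm) ∧
    (-(L - (1 - NormedSpace.exp (-τ • L))⁻¹ * L)).PosDef := by
  -- `NormedSpace.exp` depends only on the topology, so any compatible norm may be used here.
  open scoped MatrixOrder Matrix.Norms.L2Operator in
  rw [Matrix.nonsing_inv_eq_ringInverse, ← Matrix.isHermitian_iff_isSymm,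
    Matrix.isHermitian_iff_isSelfAdjoint, ← Matrix.isStrictlyPositive_iff_posDef]
  exact ⟨hL.isHermitian.isSelfAdjoint.sub_ringInverse_one_sub_exp_neg_smul_mul hL.isUnit hτ.ne',
    hL.isStrictlyPositive.neg_sub_ringInverse_one_sub_exp_neg_smul_mul hτ⟩

theorem stmt_14 (m : ℕ) (L : Matrix (Fin m) (Fin m) ℝ) (τ : ℝ) (hτ : 0 < τ)
    (hL : L.PosDef) (hLsymm : L.IsSymm) :
    ((L - (1 - NormedSpace.exp (-τ • L))⁻¹ * L).IsSymm) ∧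
    (-(L - (1 - NormedSpace.exp (-τ • L))⁻¹ * L)).PosDef :=
  stmt_14_general m L τ hτ hL
end
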